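/- Let $X_1, \ldots, X_n$ be independent with $X_i \sim \mathrm{Exp}((n-i+1)^2)$, $Y_k = \sum_{i=1}^k X_i$. For $\ell \geq 1$ and $n \geq 6\ell$: $\mathbb{P}(Y_{n-\ell} < \frac{1}{6\ell}) \leq \frac{12}{\ell}$ and $\mathbb{P}(Y_{n-\ell} > \frac{7}{6\ell}) \leq \frac{12}{\ell}$. -/

import Mathlib

open MeasureTheory ProbabilityTheory Finset Real
open scoped ENNReal Nat

/-!
`X i ~ Exp(r)` has mean `1/r` and variance `1/r²`, computed from the Gamma integral. With
`r_i = (n - i + 1)²`, reindexing by `j = n - i + 1` shows that `Y (n - ℓ)` has mean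
`∑_{ℓ < j ≤ n} 1/j²` and, by independence, variance `∑_{ℓ < j ≤ n} 1/j⁴`. Telescoping against
`1/(j-1) - 1/j`, `1/j - 1/(j+1)` and `(1/3)(1/(j-1)³ - 1/j³)` gives
`1/(3ℓ) ≤ E[Y] ≤ 1/ℓ` (using `n ≥ 6ℓ`) and `Var[Y] ≤ 1/(3ℓ³)`, so both tails lie at distance at
least `1/(6ℓ)` from the mean and Chebyshev bounds them by `(1/(3ℓ³)) · (6ℓ)² = 12/ℓ`.
-/

lemma Finset.sum_Ioc_sub_succ {M : Type*} [AddCommGroup M] (g : ℕ → M) {a b : ℕ} (hab : a ≤ b) :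
    ∑ j ∈ Ioc a b, (g j - g (j + 1)) = g (a + 1) - g (b + 1) := by
  rw [← Finset.Ico_add_one_add_one_eq_Ioc, ← neg_sub, ← sum_Ico_sub g (by omega),
    ← sum_neg_distrib]
  simp_rw [neg_sub]

lemma Finset.sum_Icc_reflect_eq_sum_Ioc {M : Type*} [AddCommMonoid M] (f : ℕ → M) (a n : ℕ) :
    ∑ i ∈ Icc 1 (n - a), f (n - i + 1) = ∑ j ∈ Ioc a n, f j := by
  refine sum_nbij' (fun i ↦ n - i + 1) (fun j ↦ n - j + 1) ?_ ?_ ?_ ?_ (fun _ _ ↦ rfl) <;>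
    intro i hi <;> simp only [mem_Icc, mem_Ioc] at hi ⊢ <;> omega

lemma sum_Ioc_inv_sq_le {a b : ℕ} (ha : 0 < a) (hab : a ≤ b) :
    ∑ j ∈ Ioc a b, ((j : ℝ) ^ 2)⁻¹ ≤ (a : ℝ)⁻¹ := by
  calc ∑ j ∈ Ioc a b, ((j : ℝ) ^ 2)⁻¹
        ≤ ∑ j ∈ Ioc a b, (((j : ℝ) - 1)⁻¹ - (((j + 1 : ℕ) : ℝ) - 1)⁻¹) := by
          refine sum_le_sum fun j hj ↦ ?_
          have hj : (2 : ℝ) ≤ j := by norm_cast; simp only [mem_Ioc] at hj; omega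
          push_cast
          rw [add_sub_cancel_right, inv_sub_inv (by linarith) (by linarith), ← one_div,
            div_le_div_iff₀ (by positivity) (by nlinarith)]
          nlinarith
    _ = (a : ℝ)⁻¹ - (b : ℝ)⁻¹ := by rw [sum_Ioc_sub_succ _ hab]; push_cast; ring
    _ ≤ (a : ℝ)⁻¹ := sub_le_self _ (by positivity)

lemma inv_add_one_sub_inv_add_one_le_sum_Ioc_inv_sq {a b : ℕ} (hab : a ≤ b) :
    ((a : ℝ) + 1)⁻¹ - ((b : ℝ) + 1)⁻¹ ≤ ∑ j ∈ Ioc a b, ((j : ℝ) ^ 2)⁻¹ := by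
  calc ((a : ℝ) + 1)⁻¹ - ((b : ℝ) + 1)⁻¹
        = ∑ j ∈ Ioc a b, ((j : ℝ)⁻¹ - ((j + 1 : ℕ) : ℝ)⁻¹) := by
          rw [sum_Ioc_sub_succ (fun j : ℕ ↦ (j : ℝ)⁻¹) hab]; push_cast; ring
    _ ≤ ∑ j ∈ Ioc a b, ((j : ℝ) ^ 2)⁻¹ := by
          refine sum_le_sum fun j hj ↦ ?_
          have hj : (1 : ℝ) ≤ j := by norm_cast; simp only [mem_Ioc] at hj; omega
          push_cast
          rw [inv_sub_inv (by linarith) (by linarith), ← one_div,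
            div_le_div_iff₀ (by positivity) (by nlinarith)]
          nlinarith

lemma sum_Ioc_inv_pow_four_le {a b : ℕ} (ha : 0 < a) (hab : a ≤ b) :
    ∑ j ∈ Ioc a b, ((j : ℝ) ^ 4)⁻¹ ≤ (3 * (a : ℝ) ^ 3)⁻¹ := by
  calc ∑ j ∈ Ioc a b, ((j : ℝ) ^ 4)⁻¹
        ≤ ∑ j ∈ Ioc a b, ((3 * ((j : ℝ) - 1) ^ 3)⁻¹ - (3 * (((j + 1 : ℕ) : ℝ) - 1) ^ 3)⁻¹) := by
          refine sum_le_sum fun j hj ↦ ?_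
          have hj : (2 : ℝ) ≤ j := by norm_cast; simp only [mem_Ioc] at hj; omega
          push_cast
          have h1 : (0 : ℝ) < j - 1 := by linarith
          rw [add_sub_cancel_right, inv_sub_inv (by positivity) (by positivity), ← one_div,
            div_le_div_iff₀ (by positivity) (by positivity)]
          nlinarith [pow_pos h1 3, pow_pos h1 2]
    _ = (3 * (a : ℝ) ^ 3)⁻¹ - (3 * (b : ℝ) ^ 3)⁻¹ := by
          rw [sum_Ioc_sub_succ _ hab]; push_cast; ring
    _ ≤ (3 * (a : ℝ) ^ 3)⁻¹ := sub_le_self _ (by positivity)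

namespace ProbabilityTheory

variable {r : ℝ}

lemma expMeasure_eq_withDensity_restrict :
    expMeasure r = (volume.restrict (Set.Ici 0)).withDensity
      fun x ↦ ((r * exp (-(r * x))).toNNReal : ℝ≥0∞) := by
  rw [← withDensity_indicator measurableSet_Ici]
  show volume.withDensity (exponentialPDF r) = _
  congr 1
  funext x
  by_cases hx : 0 ≤ x
  · simp [hx, exponentialPDF_eq, ENNReal.ofReal]
  · simp [hx, exponentialPDF_eq]

lemma integral_expMeasure (hr : 0 ≤ r) (g : ℝ → ℝ) :
    ∫ x, g x ∂expMeasure r = ∫ x in Set.Ioi 0, r * exp (-(r * x)) * g x := by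
  have hdens (x : ℝ) : ((r * exp (-(r * x))).toNNReal : ℝ) = r * exp (-(r * x)) :=
    Real.coe_toNNReal _ (by positivity)
  rw [expMeasure_eq_withDensity_restrict, integral_withDensity_eq_integral_smul (by fun_prop),
    integral_Ici_eq_integral_Ioi]
  simp only [NNReal.smul_def, hdens, smul_eq_mul]

lemma integrable_expMeasure_iff (hr : 0 < r) {g : ℝ → ℝ} :
    Integrable g (expMeasure r) ↔ IntegrableOn (fun x ↦ exp (-(r * x)) * g x) (Set.Ioi 0) := by
  have hdens (x : ℝ) : ((r * exp (-(r * x))).toNNReal : ℝ) = r * exp (-(r * x)) :=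
    Real.coe_toNNReal _ (by positivity)
  rw [expMeasure_eq_withDensity_restrict, integrable_withDensity_iff_integrable_smul (by fun_prop),
    ← IntegrableOn, integrableOn_Ici_iff_integrableOn_Ioi]
  simp only [NNReal.smul_def, hdens, smul_eq_mul, mul_assoc]
  refine ⟨fun h ↦ ?_, fun h ↦ h.const_mul r⟩
  have := h.const_mul r⁻¹
  simp only [← mul_assoc, inv_mul_cancel₀ hr.ne', one_mul] at this
  exact this

lemma integrable_pow_expMeasure (hr : 0 < r) (k : ℕ) :
    Integrable (fun x ↦ x ^ k) (expMeasure r) := by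
  rw [integrable_expMeasure_iff hr]
  refine (integrableOn_rpow_mul_exp_neg_mul_rpow (s := k) (by linarith [k.cast_nonneg (α := ℝ)])
    one_pos hr).congr_fun (fun x _ ↦ ?_) measurableSet_Ioi
  simp [mul_comm]

lemma integral_pow_expMeasure (hr : 0 < r) (k : ℕ) :
    ∫ x, x ^ k ∂expMeasure r = k ! / r ^ k := by
  have hGamma := integral_rpow_mul_exp_neg_mul_Ioi (a := k + 1) (by positivity) hr
  rw [add_sub_cancel_right, Gamma_nat_eq_factorial] at hGamma
  norm_cast at hGamma
  rw [integral_expMeasure hr.le]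
  calc ∫ x in Set.Ioi 0, r * exp (-(r * x)) * x ^ k
        = r * ∫ x in Set.Ioi 0, x ^ k * exp (-(r * x)) := by
          rw [← integral_const_mul]; congr with x; ring
    _ = k ! / r ^ k := by rw [hGamma, one_div_pow, pow_succ]; field_simp

lemma integral_id_expMeasure (hr : 0 < r) : ∫ x, x ∂expMeasure r = r⁻¹ := by
  simpa using integral_pow_expMeasure hr 1

lemma memLp_two_id_expMeasure (hr : 0 < r) : MemLp id 2 (expMeasure r) :=
  (memLp_two_iff_integrable_sq aestronglyMeasurable_id).2 (integrable_pow_expMeasure hr 2)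

lemma variance_id_expMeasure (hr : 0 < r) : Var[id; expMeasure r] = (r ^ 2)⁻¹ := by
  have := isProbabilityMeasure_expMeasure hr
  rw [variance_eq_sub (memLp_two_id_expMeasure hr)]
  simp only [Pi.pow_apply, id_eq, integral_pow_expMeasure hr 2, integral_id_expMeasure hr]
  field_simp
  norm_num [Nat.factorial]

variable {Ω : Type*} {mΩ : MeasurableSpace Ω} {μ : Measure Ω}

lemma HasLaw.memLp_two_of_expMeasure {X : Ω → ℝ} (hX : HasLaw X (expMeasure r) μ) (hr : 0 < r) :
    MemLp X 2 μ := by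
  have h := memLp_two_id_expMeasure hr
  rwa [← hX.map_eq, memLp_map_measure_iff (by rw [hX.map_eq]; fun_prop) hX.aemeasurable] at h

section Sum

variable {ι : Type*} {s : Finset ι} {X : ι → Ω → ℝ} {r : ι → ℝ}

lemma integral_sum_of_hasLaw_expMeasure [IsFiniteMeasure μ] (hr : ∀ i ∈ s, 0 < r i)
    (hX : ∀ i ∈ s, HasLaw (X i) (expMeasure (r i)) μ) :
    μ[∑ i ∈ s, X i] = ∑ i ∈ s, (r i)⁻¹ := by
  simp only [Finset.sum_apply]
  rw [integral_finsetSum s fun i hi ↦ ((hX i hi).memLp_two_of_expMeasure (hr i hi)).integrable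
    one_le_two]
  exact sum_congr rfl fun i hi ↦ (hX i hi).integral_eq.trans (integral_id_expMeasure (hr i hi))

lemma variance_sum_of_hasLaw_expMeasure (hr : ∀ i ∈ s, 0 < r i)
    (hX : ∀ i ∈ s, HasLaw (X i) (expMeasure (r i)) μ)
    (hindep : Set.Pairwise s fun i j ↦ X i ⟂ᵢ[μ] X j) :
    Var[∑ i ∈ s, X i; μ] = ∑ i ∈ s, (r i ^ 2)⁻¹ := by
  rw [IndepFun.variance_sum (fun i hi ↦ (hX i hi).memLp_two_of_expMeasure (hr i hi)) hindep]
  exact sum_congr rfl fun i hi ↦ (hX i hi).variance_eq.trans (variance_id_expMeasure (hr i hi))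

end Sum

variable [IsFiniteMeasure μ] {Y : Ω → ℝ} {a t : ℝ}

lemma meas_lt_le_variance_div_sq (hY : MemLp Y 2 μ) (ht : 0 < t) (h : a + t ≤ μ[Y]) :
    μ {ω | Y ω < a} ≤ ENNReal.ofReal (Var[Y; μ] / t ^ 2) :=
  (meas_ge_le_variance_div_sq hY ht).trans' <| measure_mono fun ω (hω : Y ω < a) ↦
    le_abs.2 (.inr (by linarith : t ≤ -(Y ω - μ[Y])))

lemma meas_gt_le_variance_div_sq (hY : MemLp Y 2 μ) (ht : 0 < t) (h : μ[Y] + t ≤ a) :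
    μ {ω | a < Y ω} ≤ ENNReal.ofReal (Var[Y; μ] / t ^ 2) :=
  (meas_ge_le_variance_div_sq hY ht).trans' <| measure_mono fun ω (hω : a < Y ω) ↦
    le_abs.2 (.inl (by linarith : t ≤ Y ω - μ[Y]))

lemma measure_tails_le_of_moment_bounds (hY : MemLp Y 2 μ) {ℓ : ℝ} (hℓ : 0 < ℓ)
    (hlo : (3 * ℓ)⁻¹ ≤ μ[Y]) (hhi : μ[Y] ≤ ℓ⁻¹) (hvar : Var[Y; μ] ≤ (3 * ℓ ^ 3)⁻¹) :
    μ {ω | Y ω < 1 / (6 * ℓ)} ≤ ENNReal.ofReal (12 / ℓ) ∧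
    μ {ω | 7 / (6 * ℓ) < Y ω} ≤ ENNReal.ofReal (12 / ℓ) := by
  have hvar_div : Var[Y; μ] / (1 / (6 * ℓ)) ^ 2 ≤ 12 / ℓ :=
    calc Var[Y; μ] / (1 / (6 * ℓ)) ^ 2 ≤ (3 * ℓ ^ 3)⁻¹ / (1 / (6 * ℓ)) ^ 2 := by gcongr
      _ = 12 / ℓ := by field_simp; ring
  have hlo' : 1 / (6 * ℓ) + 1 / (6 * ℓ) ≤ μ[Y] := by
    have h : 1 / (6 * ℓ) + 1 / (6 * ℓ) = (3 * ℓ)⁻¹ := by field_simp; ring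
    linarith
  have hhi' : μ[Y] + 1 / (6 * ℓ) ≤ 7 / (6 * ℓ) := by
    have h : ℓ⁻¹ + 1 / (6 * ℓ) = 7 / (6 * ℓ) := by field_simp; ring
    linarith
  exact ⟨(meas_lt_le_variance_div_sq hY (by positivity) hlo').trans
      (ENNReal.ofReal_le_ofReal hvar_div),
    (meas_gt_le_variance_div_sq hY (by positivity) hhi').trans
      (ENNReal.ofReal_le_ofReal hvar_div)⟩

end ProbabilityTheory

/-- With `X i ~ Exp((n-i+1)²)` independent and `Y k = ∑_{i=1}^k X i`, for `ℓ ≥ 1` and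
`n ≥ 6ℓ`: `P(Y (n-ℓ) < 1/(6ℓ)) ≤ 12/ℓ` and `P(Y (n-ℓ) > 7/(6ℓ)) ≤ 12/ℓ`. -/
theorem stmt14
    {Ω : Type*} [MeasurableSpace Ω] (μ : Measure Ω) [IsProbabilityMeasure μ]
    (n : ℕ) (X : ℕ → Ω → ℝ)
    (hmeas : ∀ i, Measurable (X i))
    (hindep : iIndepFun X μ)
    (hdist : ∀ i ∈ Icc 1 n, μ.map (X i) = expMeasure (((n - i + 1 : ℕ) : ℝ) ^ 2))
    (Y : ℕ → Ω → ℝ) (hY : ∀ k ω, Y k ω = ∑ i ∈ Icc 1 k, X i ω)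
    (ℓ : ℕ) (hℓ : 1 ≤ ℓ) (hn : 6 * ℓ ≤ n) :
    μ {ω | Y (n - ℓ) ω < 1 / (6 * (ℓ : ℝ))} ≤ ENNReal.ofReal (12 / (ℓ : ℝ)) ∧
    μ {ω | 7 / (6 * (ℓ : ℝ)) < Y (n - ℓ) ω} ≤ ENNReal.ofReal (12 / (ℓ : ℝ)) := by
  have hℓn : ℓ ≤ n := by omega
  have hlaw : ∀ i ∈ Icc 1 (n - ℓ), HasLaw (X i) (expMeasure (((n - i + 1 : ℕ) : ℝ) ^ 2)) μ :=
    fun i hi ↦ ⟨(hmeas i).aemeasurable, hdist i (Icc_subset_Icc_right (Nat.sub_le n ℓ) hi)⟩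
  have hrate : ∀ i ∈ Icc 1 (n - ℓ), 0 < (((n - i + 1 : ℕ) : ℝ) ^ 2) := fun i _ ↦ by positivity
  have hYsum : Y (n - ℓ) = ∑ i ∈ Icc 1 (n - ℓ), X i := by
    ext ω; rw [hY, Finset.sum_apply]
  have hmean : μ[Y (n - ℓ)] = ∑ j ∈ Ioc ℓ n, ((j : ℝ) ^ 2)⁻¹ := by
    rw [hYsum, integral_sum_of_hasLaw_expMeasure hrate hlaw]
    exact sum_Icc_reflect_eq_sum_Ioc (fun j ↦ ((j : ℝ) ^ 2)⁻¹) ℓ n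
  have hvar : Var[Y (n - ℓ); μ] = ∑ j ∈ Ioc ℓ n, ((j : ℝ) ^ 4)⁻¹ := by
    rw [hYsum, variance_sum_of_hasLaw_expMeasure hrate hlaw fun i _ j _ hij ↦ hindep.indepFun hij]
    simp only [← pow_mul, Nat.reduceMul]
    exact sum_Icc_reflect_eq_sum_Ioc (fun j ↦ ((j : ℝ) ^ 4)⁻¹) ℓ n
  refine measure_tails_le_of_moment_bounds
    (hYsum ▸ memLp_finsetSum' _ fun i hi ↦ (hlaw i hi).memLp_two_of_expMeasure (hrate i hi))
    (by positivity) ?_ (hmean ▸ sum_Ioc_inv_sq_le hℓ hℓn)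
    (hvar ▸ sum_Ioc_inv_pow_four_le hℓ hℓn)
  have hℓ' : (1 : ℝ) ≤ ℓ := by exact_mod_cast hℓ
  have hn' : 6 * (ℓ : ℝ) ≤ n := by exact_mod_cast hn
  calc (3 * (ℓ : ℝ))⁻¹ = (2 * (ℓ : ℝ))⁻¹ - (6 * (ℓ : ℝ))⁻¹ := by field_simp; ring
    _ ≤ ((ℓ : ℝ) + 1)⁻¹ - ((n : ℝ) + 1)⁻¹ := by gcongr <;> linarith
    _ ≤ μ[Y (n - ℓ)] := hmean ▸ inv_add_one_sub_inv_add_one_le_sum_Ioc_inv_sq hℓn
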